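/- arXiv:1704.06974 — 5 statements merged into one kernel-verified Lean document; each statement's English description precedes it below -/
import Mathlib

section
/- Let N, m, n be positive integers, let P be a symmetric real N×N matrix and b a real N×m matrix. Let V be a real N×(mn) matrix with orthonormal columns (Vᵀ V = I_{mn}) whose column span equals the column span of the block Krylov matrix [b, P b, P² b, …, P^{n−1} b]. Define the reduced order propagator P̃ = Vᵀ P V ∈ ℝ^{mn×mn} and the reduced order transducer matrix B̃ = Vᵀ b ∈ ℝ^{mn×m}. Then the interpolation conditions bᵀ T_k(P) b = B̃ᵀ T_k(P̃) B̃ hold for every integer k with 0 ≤ k ≤ 2n−1. -/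
/-!
Because `V * Vᵀ` is the orthogonal projection onto the Krylov space, `V * P̃ ^ j * B̃ = P ^ j * b`
for `j < n`. A moment `bᵀ * P ^ d * b` with `d < 2n` factors as `(P ^ i * b)ᵀ * M * (P ^ j * b)`
with `i, j < n` and `M ∈ {1, P}`; since `P` is symmetric and `Vᵀ * M * V ∈ {1, P̃}`, it equals
`B̃ᵀ * P̃ ^ d * B̃`. The polynomial `T_k` has degree `k < 2n`, so both sides of the claim are the
same linear combination of matching moments.
-/

open Matrix Polynomial

/-- Evaluation of the Chebyshev polynomial of the first kind at a square matrix. -/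
noncomputable def chebMat {I : Type*} [Fintype I] [DecidableEq I]
    (P : Matrix I I ℝ) (k : ℤ) : Matrix I I ℝ :=
  Polynomial.aeval P (Polynomial.Chebyshev.T ℝ k)


/-- The column span of a matrix: the submodule spanned by its columns. -/
def colSpan {I J : Type*} (M : Matrix I J ℝ) : Submodule ℝ (I → ℝ) :=
  Submodule.span ℝ (Set.range fun j => fun i => M i j)

def blockKrylov {R I J : Type*} [CommRing R] [Fintype I] [DecidableEq I]
    (P : Matrix I I R) (b : Matrix I J R) (n : ℕ) : Matrix I (Fin n × J) R :=
  Matrix.of fun i p => (P ^ (p.1 : ℕ) * b) i p.2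

theorem colSpan_eq_range_mulVecLin {I J : Type*} [Fintype J] (M : Matrix I J ℝ) :
    colSpan M = LinearMap.range M.mulVecLin :=
  (Matrix.range_mulVecLin M).symm

section ColSpan

variable {I J K : Type*} [Fintype I] [Fintype K] [DecidableEq K] {V : Matrix I K ℝ}

theorem mulVec_mul_transpose_of_mem_colSpan (hV : Vᵀ * V = 1) {x : I → ℝ}
    (hx : x ∈ colSpan V) : (V * Vᵀ) *ᵥ x = x := by
  rw [colSpan_eq_range_mulVecLin] at hx
  obtain ⟨y, rfl⟩ := hx
  simp only [Matrix.mulVecLin_apply, Matrix.mulVec_mulVec, Matrix.mul_assoc, hV, Matrix.mul_one]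

theorem mul_transpose_mul_of_colSpan_le (hV : Vᵀ * V = 1) {X : Matrix I J ℝ}
    (hX : colSpan X ≤ colSpan V) : V * Vᵀ * X = X := by
  ext i c
  exact congrFun (mulVec_mul_transpose_of_mem_colSpan hV (hX (Submodule.subset_span ⟨c, rfl⟩))) i

end ColSpan

theorem colSpan_pow_mul_le_blockKrylov {I J : Type*} [Fintype I] [DecidableEq I]
    (P : Matrix I I ℝ) (b : Matrix I J ℝ) {n j : ℕ} (hj : j < n) :
    colSpan (P ^ j * b) ≤ colSpan (blockKrylov P b n) :=
  Submodule.span_le.mpr <| Set.range_subset_iff.mpr fun c =>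
    Submodule.subset_span ⟨(⟨j, hj⟩, c), rfl⟩

section Reduction

variable {R I J K : Type*} [CommRing R] [Fintype I] [Fintype K] [DecidableEq I] [DecidableEq K]
  {P : Matrix I I R} {b : Matrix I J R} {V : Matrix I K R} {n : ℕ}

theorem mul_reduced_pow_mul_eq_pow_mul (hkry : ∀ j < n, V * Vᵀ * (P ^ j * b) = P ^ j * b) :
    ∀ j < n, V * (Vᵀ * P * V) ^ j * (Vᵀ * b) = P ^ j * b := by
  intro j
  induction j with
  | zero =>
    intro h0
    simpa [Matrix.mul_assoc] using hkry 0 h0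
  | succ j ih =>
    intro hj
    calc V * (Vᵀ * P * V) ^ (j + 1) * (Vᵀ * b)
        = V * Vᵀ * (P * (V * (Vᵀ * P * V) ^ j * (Vᵀ * b))) := by
          simp only [pow_succ', Matrix.mul_assoc]
      _ = P ^ (j + 1) * b := by
          rw [ih (by omega), ← Matrix.mul_assoc P, ← pow_succ', hkry (j + 1) hj]

theorem transpose_mul_pow_mul_pow_mul_eq_reduced (hP : P.IsSymm)
    (hkry : ∀ j < n, V * Vᵀ * (P ^ j * b) = P ^ j * b) {i j : ℕ} (hi : i < n) (hj : j < n)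
    (M : Matrix I I R) :
    bᵀ * (P ^ i * M * P ^ j) * b =
      (Vᵀ * b)ᵀ * ((Vᵀ * P * V) ^ i * (Vᵀ * M * V) * (Vᵀ * P * V) ^ j) * (Vᵀ * b) := by
  calc bᵀ * (P ^ i * M * P ^ j) * b = (P ^ i * b)ᵀ * M * (P ^ j * b) := by
        simp only [Matrix.transpose_mul, Matrix.transpose_pow, hP.eq, Matrix.mul_assoc]
    _ = (V * (Vᵀ * P * V) ^ i * (Vᵀ * b))ᵀ * M * (V * (Vᵀ * P * V) ^ j * (Vᵀ * b)) := by
        rw [mul_reduced_pow_mul_eq_pow_mul hkry i hi, mul_reduced_pow_mul_eq_pow_mul hkry j hj]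
    _ = _ := by
        simp only [Matrix.transpose_mul, Matrix.transpose_pow, Matrix.transpose_transpose, hP.eq,
          Matrix.mul_assoc]

theorem transpose_mul_pow_mul_eq_reduced (hP : P.IsSymm) (hV : Vᵀ * V = 1)
    (hkry : ∀ j < n, V * Vᵀ * (P ^ j * b) = P ^ j * b) {d : ℕ} (hd : d < 2 * n) :
    bᵀ * P ^ d * b = (Vᵀ * b)ᵀ * (Vᵀ * P * V) ^ d * (Vᵀ * b) := by
  -- `d < 2n` lets us write `P ^ d = P ^ i * M * P ^ j` with `i, j < n` and `M = 1` or `M = P`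
  obtain ⟨i, j, hi, hj, rfl | rfl⟩ : ∃ i j, i < n ∧ j < n ∧ (d = i + j ∨ d = i + 1 + j) := by
    by_cases hdn : d < n
    · exact ⟨d, 0, hdn, by omega, Or.inl rfl⟩
    · exact ⟨n - 1, d - n, by omega, by omega, Or.inr (by omega)⟩
  · simpa [hV, ← pow_add] using transpose_mul_pow_mul_pow_mul_eq_reduced hP hkry hi hj 1
  · simpa [← pow_succ, ← pow_add] using transpose_mul_pow_mul_pow_mul_eq_reduced hP hkry hi hj P

end Reduction

theorem mul_aeval_mul_eq_of_mul_pow_mul_eq {R I K J L : Type*} [CommRing R]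
    [Fintype I] [Fintype K] [DecidableEq I] [DecidableEq K]
    {P : Matrix I I R} {Q : Matrix K K R} {c : Matrix J I R} {b : Matrix I L R}
    {c' : Matrix J K R} {b' : Matrix K L R} {D : ℕ}
    (hmom : ∀ d < D, c * P ^ d * b = c' * Q ^ d * b') {p : R[X]} (hp : p.natDegree < D) :
    c * aeval P p * b = c' * aeval Q p * b' := by
  simp only [aeval_eq_sum_range' hp, Matrix.mul_sum, Matrix.sum_mul, Matrix.mul_smul,
    Matrix.smul_mul]
  exact Finset.sum_congr rfl fun d hd => by rw [hmom d (Finset.mem_range.mp hd)]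

theorem stmt0_general (N m n : ℕ) (hn : 0 < n)
    (P : Matrix (Fin N) (Fin N) ℝ) (hP : P.IsSymm)
    (b : Matrix (Fin N) (Fin m) ℝ)
    (V : Matrix (Fin N) (Fin n × Fin m) ℝ)
    (hV : Vᵀ * V = 1)
    (hspan : colSpan V =
      colSpan (Matrix.of fun i (p : Fin n × Fin m) => (P ^ (p.1 : ℕ) * b) i p.2)) :
    ∀ k : ℕ, k ≤ 2 * n - 1 →
      bᵀ * chebMat P k * b =
        (Vᵀ * b)ᵀ * chebMat (Vᵀ * P * V) k * (Vᵀ * b) := by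
  intro k hk
  have hkry : ∀ j < n, V * Vᵀ * (P ^ j * b) = P ^ j * b := fun j hj =>
    mul_transpose_mul_of_colSpan_le hV (hspan ▸ colSpan_pow_mul_le_blockKrylov P b hj)
  refine mul_aeval_mul_eq_of_mul_pow_mul_eq
    (fun d hd => transpose_mul_pow_mul_eq_reduced hP hV hkry hd) ?_
  rw [Chebyshev.natDegree_T, Int.natAbs_natCast]
  omega

theorem stmt0 (N m n : ℕ) (hN : 0 < N) (hm : 0 < m) (hn : 0 < n)
    (P : Matrix (Fin N) (Fin N) ℝ) (hP : P.IsSymm)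
    (b : Matrix (Fin N) (Fin m) ℝ)
    (V : Matrix (Fin N) (Fin n × Fin m) ℝ)
    (hV : Vᵀ * V = 1)
    (hspan : colSpan V =
      colSpan (Matrix.of fun i (p : Fin n × Fin m) => (P ^ (p.1 : ℕ) * b) i p.2)) :
    ∀ k : ℕ, k ≤ 2 * n - 1 →
      bᵀ * chebMat P k * b =
        (Vᵀ * b)ᵀ * chebMat (Vᵀ * P * V) k * (Vᵀ * b) :=
  stmt0_general N m n hn P hP b V hV hspan
end

section
/- Let N, m, n be positive integers, let P be a symmetric real N×N matrix and b a real N×m matrix. Let V be a real N×(mn) matrix with orthonormal columns (Vᵀ V = I_{mn}) whose column span equals the column span of the block Krylov matrix [b, P b, P² b, …, P^{n−1} b]. Define P̃ = Vᵀ P V and B̃ = Vᵀ b. Then for every integer k with 0 ≤ k ≤ n−1 the snapshots are exactly reproduced by the reduced model: V · T_k(P̃) · B̃ = T_k(P) · b. -/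
/-
Let `Π = V Vᵀ`, the orthogonal projection onto the column span of `V`. The columns of `Pʲ b`,
`j < n`, are columns of the block Krylov matrix, so `Π` fixes them. Hence, by induction on `j`,
`V (Vᵀ P V)ʲ Vᵀ b = Π P (V (Vᵀ P V)ʲ⁻¹ Vᵀ b) = Π Pʲ b = Pʲ b` for `j < n`, and by linearity
`V q(Vᵀ P V) Vᵀ b = q(P) b` for every polynomial `q` of degree `< n`; `T_k` has degree `k`.
-/

open Matrix Polynomial

namespace Matrix

variable {I ι J : Type*} [Fintype ι]

theorem colSpan_eq_range_mulVecLin (M : Matrix I ι ℝ) :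
    colSpan M = LinearMap.range M.mulVecLin :=
  (range_mulVecLin M).symm

theorem exists_mul_eq_of_colSpan_le {V : Matrix I ι ℝ} {M : Matrix I J ℝ}
    (h : colSpan M ≤ colSpan V) : ∃ C : Matrix ι J ℝ, V * C = M := by
  have hcol : ∀ j, ∃ c, V *ᵥ c = M.col j := fun j => by
    have : M.col j ∈ colSpan V := h (Submodule.subset_span ⟨j, rfl⟩)
    rwa [colSpan_eq_range_mulVecLin] at this
  choose c hc using hcol
  refine ⟨(Matrix.of c)ᵀ, ?_⟩
  ext i j
  exact congrFun (hc j) i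

theorem mul_transpose_mul_of_colSpan_le [Fintype I] [DecidableEq ι] {V : Matrix I ι ℝ}
    {M : Matrix I J ℝ} (hV : Vᵀ * V = 1) (h : colSpan M ≤ colSpan V) : V * (Vᵀ * M) = M := by
  obtain ⟨C, rfl⟩ := exists_mul_eq_of_colSpan_le h
  rw [← Matrix.mul_assoc Vᵀ, hV, Matrix.one_mul]

def blockKrylov [Fintype I] [DecidableEq I] (P : Matrix I I ℝ) (b : Matrix I J ℝ) (n : ℕ) :
    Matrix I (Fin n × J) ℝ :=
  of fun i p => (P ^ (p.1 : ℕ) * b) i p.2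

theorem colSpan_pow_mul_le_colSpan_blockKrylov [Fintype I] [DecidableEq I] (P : Matrix I I ℝ)
    (b : Matrix I J ℝ) {n j : ℕ} (hj : j < n) :
    colSpan (P ^ j * b) ≤ colSpan (blockKrylov P b n) :=
  Submodule.span_le.mpr <| by
    rintro _ ⟨l, rfl⟩
    exact Submodule.subset_span ⟨(⟨j, hj⟩, l), rfl⟩

variable {R : Type*} [CommRing R] [Fintype I] [DecidableEq I] [DecidableEq ι]
  {V : Matrix I ι R} {P : Matrix I I R} {b : Matrix I J R} {d : ℕ}

theorem mul_pow_projected_mul_eq (hfix : ∀ j ≤ d, V * (Vᵀ * (P ^ j * b)) = P ^ j * b) :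
    ∀ j ≤ d, V * (Vᵀ * P * V) ^ j * (Vᵀ * b) = P ^ j * b
  | 0, _ => by simpa [Matrix.mul_assoc] using hfix 0 (Nat.zero_le d)
  | j + 1, hj => by
    have ih := mul_pow_projected_mul_eq hfix j (by omega)
    calc V * (Vᵀ * P * V) ^ (j + 1) * (Vᵀ * b)
        = V * (Vᵀ * (P * (V * (Vᵀ * P * V) ^ j * (Vᵀ * b)))) := by
          simp only [pow_succ', Matrix.mul_assoc]
      _ = P ^ (j + 1) * b := by rw [ih, ← Matrix.mul_assoc P, ← pow_succ', hfix (j + 1) hj]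

theorem mul_aeval_projected_mul_eq (hfix : ∀ j ≤ d, V * (Vᵀ * (P ^ j * b)) = P ^ j * b)
    {q : R[X]} (hq : q.natDegree ≤ d) :
    V * aeval (Vᵀ * P * V) q * (Vᵀ * b) = aeval P q * b := by
  have hlt : q.natDegree < d + 1 := Nat.lt_succ_of_le hq
  rw [aeval_eq_sum_range' hlt, aeval_eq_sum_range' hlt, Matrix.mul_sum, Matrix.sum_mul,
    Matrix.sum_mul]
  refine Finset.sum_congr rfl fun j hj => ?_
  rw [Matrix.mul_smul, Matrix.smul_mul, Matrix.smul_mul,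
    mul_pow_projected_mul_eq hfix j (Nat.lt_succ_iff.mp (Finset.mem_range.mp hj))]

end Matrix

theorem stmt1_general (N m n : ℕ) (hn : 0 < n)
    (P : Matrix (Fin N) (Fin N) ℝ)
    (b : Matrix (Fin N) (Fin m) ℝ)
    (V : Matrix (Fin N) (Fin n × Fin m) ℝ)
    (hV : Vᵀ * V = 1)
    (hspan : colSpan V =
      colSpan (Matrix.of fun i (p : Fin n × Fin m) => (P ^ (p.1 : ℕ) * b) i p.2)) :
    ∀ k : ℕ, k ≤ n - 1 →
      V * chebMat (Vᵀ * P * V) k * (Vᵀ * b) = chebMat P k * b := by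
  intro k hk
  have hfix : ∀ j ≤ n - 1, V * (Vᵀ * (P ^ j * b)) = P ^ j * b := fun j hj =>
    mul_transpose_mul_of_colSpan_le hV <| hspan ▸
      colSpan_pow_mul_le_colSpan_blockKrylov P b (by omega)
  refine mul_aeval_projected_mul_eq hfix ?_
  rwa [Chebyshev.natDegree_T, Int.natAbs_natCast]

theorem stmt1 (N m n : ℕ) (hN : 0 < N) (hm : 0 < m) (hn : 0 < n)
    (P : Matrix (Fin N) (Fin N) ℝ) (hP : P.IsSymm)
    (b : Matrix (Fin N) (Fin m) ℝ)
    (V : Matrix (Fin N) (Fin n × Fin m) ℝ)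
    (hV : Vᵀ * V = 1)
    (hspan : colSpan V =
      colSpan (Matrix.of fun i (p : Fin n × Fin m) => (P ^ (p.1 : ℕ) * b) i p.2)) :
    ∀ k : ℕ, k ≤ n - 1 →
      V * chebMat (Vᵀ * P * V) k * (Vᵀ * b) = chebMat P k * b :=
  stmt1_general N m n hn P b V hV hspan
end

section
/- Let N, m, n be positive integers, let P be a symmetric real N×N matrix and b a real N×m matrix. Let U be the N×(mn) snapshot matrix whose k-th block column (k = 0,…,n−1) is T_k(P) b. Suppose U = V Lᵀ, where V is N×(mn) with orthonormal columns (Vᵀ V = I_{mn}) and L ∈ ℝ^{mn×mn} is invertible and block lower triangular with respect to the m×m block structure (its (k,l) block L_{k,l} is the zero m×m matrix whenever l > k). Then the reduced order propagator P̃ = Vᵀ P V is block tridiagonal: its (k,l) m×m block P̃_{k,l} is the zero matrix whenever |k − l| ≥ 2. -/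
open Matrix Polynomial

/-!
Since `Vᵀ V = 1` and `U = V Lᵀ`, we have `Vᵀ U = Lᵀ`, which is block upper triangular: block row `k`
of `Vᵀ` is orthogonal to every snapshot `T_s(P) b` with `s < k`. The three-term recurrence
`2 P T_l = T_{l+1} + T_{|l-1|}` then makes block row `k` of `Vᵀ` orthogonal to `P T_l(P) b` as soon
as `l + 2 ≤ k`, i.e. `Vᵀ P U` vanishes below its first block subdiagonal. Multiplying on the right by
the block upper triangular `Lᵀ⁻¹` gives the same for `Vᵀ P V = Vᵀ P U Lᵀ⁻¹`, and symmetry of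
`Vᵀ P V` handles the blocks above the diagonal.
-/

section Chebyshev

variable {I : Type*} [Fintype I] [DecidableEq I] (P : Matrix I I ℝ)

lemma chebMat_natAbs (k : ℤ) : chebMat P k.natAbs = chebMat P k := by
  rw [chebMat, Chebyshev.T_natAbs, chebMat]

lemma two_smul_mul_chebMat (k : ℤ) :
    (2 : ℝ) • (P * chebMat P k) = chebMat P (1 + k) + chebMat P (1 - k) := by
  have h := congrArg (aeval P) (Chebyshev.T_mul_T ℝ 1 k)
  simp only [Chebyshev.T_one, map_add, _root_.map_mul, map_ofNat, aeval_X] at h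
  rw [chebMat, chebMat, chebMat, ← h, Matrix.mul_assoc, two_smul, two_mul]

lemma mul_mul_chebMat_mul_apply_eq_zero {κ J : Type*} (W : Matrix κ I ℝ) (B : Matrix I J ℝ)
    (l : ℕ) (r : κ) (c : J) (h : ∀ s : ℕ, s ≤ l + 1 → (W * (chebMat P s * B)) r c = 0) :
    (W * P * (chebMat P l * B)) r c = 0 := by
  have hrec : (2 : ℝ) * (W * P * (chebMat P l * B)) r c =
      (W * (chebMat P (1 + l) * B)) r c + (W * (chebMat P (1 - l) * B)) r c := by
    rw [← smul_eq_mul, ← Matrix.smul_apply, ← Matrix.add_apply, ← Matrix.mul_add, ← Matrix.add_mul,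
      ← two_smul_mul_chebMat, Matrix.smul_mul, Matrix.mul_smul, Matrix.mul_assoc, Matrix.mul_assoc]
  have hsucc := h (1 + (l : ℤ)).natAbs (by omega)
  have hpred := h (1 - (l : ℤ)).natAbs (by omega)
  rw [chebMat_natAbs] at hsucc hpred
  simpa [hsucc, hpred] using hrec

end Chebyshev

lemma Matrix.IsSymm.transpose_mul_mul {ι κ R : Type*} [Fintype ι] [CommSemiring R]
    {A : Matrix ι ι R} (hA : A.IsSymm) (B : Matrix ι κ R) : (Bᵀ * A * B).IsSymm := by
  rw [IsSymm, transpose_mul, transpose_mul, transpose_transpose, hA.eq, Matrix.mul_assoc]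

lemma Matrix.mul_apply_eq_zero_of_blockTriangular {ι κ α R : Type*} [Fintype κ]
    [NonUnitalNonAssocSemiring R] [LinearOrder α] {f : κ → α} {A : Matrix ι κ R}
    {B : Matrix κ κ R} (hB : B.BlockTriangular f) {p : ι} {r : κ}
    (hA : ∀ q, f q ≤ f r → A p q = 0) : (A * B) p r = 0 := by
  rw [mul_apply]
  refine Finset.sum_eq_zero fun q _ => ?_
  rcases le_or_gt (f q) (f r) with hq | hq
  · exact mul_eq_zero_of_left (hA q hq) _
  · exact mul_eq_zero_of_right _ (hB hq)

theorem stmt2_general (N m n : ℕ)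
    (P : Matrix (Fin N) (Fin N) ℝ) (hP : P.IsSymm)
    (b : Matrix (Fin N) (Fin m) ℝ)
    (U V : Matrix (Fin N) (Fin n × Fin m) ℝ)
    (hU : U = Matrix.of fun i (p : Fin n × Fin m) => (chebMat P (p.1 : ℕ) * b) i p.2)
    (L : Matrix (Fin n × Fin m) (Fin n × Fin m) ℝ)
    (hQR : U = V * Lᵀ)
    (hV : Vᵀ * V = 1)
    (hLinv : IsUnit L)
    (hLtri : ∀ k l : Fin n, (k : ℕ) < l → ∀ i j : Fin m, L (k, i) (l, j) = 0) :
    ∀ k l : Fin n, ((k : ℕ) + 2 ≤ l ∨ (l : ℕ) + 2 ≤ k) →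
      ∀ i j : Fin m, (Vᵀ * P * V) (k, i) (l, j) = 0 := by
  have hVU : Vᵀ * U = Lᵀ := by rw [hQR, ← Matrix.mul_assoc, hV, Matrix.one_mul]
  have hPU : ∀ (k l : Fin n) (i j : Fin m), (l : ℕ) + 2 ≤ k → (Vᵀ * P * U) (k, i) (l, j) = 0 := by
    intro k l i j hlk
    subst hU
    refine mul_mul_chebMat_mul_apply_eq_zero P Vᵀ b l (k, i) j fun s hs => ?_
    have hsn : s < n := by omega
    -- `Vᵀ * U` restricted to block column `s` is `Vᵀ * (T_s(P) b)` definitionally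
    have h := congrFun (congrFun hVU (k, i)) (⟨s, hsn⟩, j)
    exact h.trans (hLtri ⟨s, hsn⟩ k (show s < k by omega) j i)
  have hLT : Lᵀ.BlockTriangular Prod.fst := fun p q hqp => hLtri q.1 p.1 hqp q.2 p.2
  have hdet : IsUnit Lᵀ.det := by rwa [det_transpose, ← isUnit_iff_isUnit_det]
  have : Invertible Lᵀ := invertibleOfIsUnitDet _ hdet
  have hVeq : V = U * Lᵀ⁻¹ := by rw [hQR, Matrix.mul_assoc, mul_nonsing_inv _ hdet, Matrix.mul_one]
  have hlower : ∀ (k l : Fin n) (i j : Fin m), (l : ℕ) + 2 ≤ k → (Vᵀ * P * V) (k, i) (l, j) = 0 := by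
    intro k l i j hlk
    rw [show Vᵀ * P * V = Vᵀ * P * U * Lᵀ⁻¹ by rw [Matrix.mul_assoc _ U, ← hVeq]]
    exact mul_apply_eq_zero_of_blockTriangular (blockTriangular_inv_of_blockTriangular hLT)
      fun q (hq : q.1 ≤ l) => hPU k q.1 i q.2 (by omega)
  rintro k l (hkl | hlk) i j
  · rw [← (hP.transpose_mul_mul V).apply]
    exact hlower l k j i hkl
  · exact hlower k l i j hlk

theorem stmt2 (N m n : ℕ) (hN : 0 < N) (hm : 0 < m) (hn : 0 < n)
    (P : Matrix (Fin N) (Fin N) ℝ) (hP : P.IsSymm)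
    (b : Matrix (Fin N) (Fin m) ℝ)
    (U V : Matrix (Fin N) (Fin n × Fin m) ℝ)
    (hU : U = Matrix.of fun i (p : Fin n × Fin m) => (chebMat P (p.1 : ℕ) * b) i p.2)
    (L : Matrix (Fin n × Fin m) (Fin n × Fin m) ℝ)
    (hQR : U = V * Lᵀ)
    (hV : Vᵀ * V = 1)
    (hLinv : IsUnit L)
    (hLtri : ∀ k l : Fin n, (k : ℕ) < l → ∀ i j : Fin m, L (k, i) (l, j) = 0) :
    ∀ k l : Fin n, ((k : ℕ) + 2 ≤ l ∨ (l : ℕ) + 2 ≤ k) →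
      ∀ i j : Fin m, (Vᵀ * P * V) (k, i) (l, j) = 0 :=
  stmt2_general N m n P hP b U V hU L hQR hV hLinv hLtri
end

section
/- Let N, m, n be positive integers, let P be a symmetric real N×N matrix and b a real N×m matrix. Let U be the N×(mn) snapshot matrix whose k-th block column (k = 0,…,n−1) is T_k(P) b. Suppose U = V Lᵀ, where V is N×(mn) with orthonormal columns (Vᵀ V = I_{mn}) and L ∈ ℝ^{mn×mn} is invertible and block lower triangular with respect to the m×m block structure (its (k,l) block L_{k,l} is the zero m×m matrix whenever l > k). Then the reduced order transducer matrix B̃ = Vᵀ b ∈ ℝ^{mn×m} has all block rows zero except the first: its k-th m×m block B̃_k is the zero matrix for every k with 1 ≤ k ≤ n−1. -/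
/-! Since `T₀ = 1`, the matrix `b` is the `0`-th block column of `U`, so `Vᵀ b` is the `0`-th block
column of `Vᵀ U = Lᵀ`, which is block upper triangular. -/

open Matrix Polynomial

theorem chebMat_zero {I : Type*} [Fintype I] [DecidableEq I] (P : Matrix I I ℝ) :
    chebMat P 0 = 1 := by
  simp [chebMat]

theorem transpose_mul_eq_of_eq_mul_transpose {R ι κ μ : Type*} [CommSemiring R]
    [Fintype ι] [Fintype κ] [DecidableEq κ]
    {U : Matrix ι μ R} {V : Matrix ι κ R} {L : Matrix μ κ R}
    (hQR : U = V * Lᵀ) (hV : Vᵀ * V = 1) : Vᵀ * U = Lᵀ := by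
  rw [hQR, ← Matrix.mul_assoc, hV, Matrix.one_mul]

theorem stmt3_general (N m n : ℕ)
    (P : Matrix (Fin N) (Fin N) ℝ)
    (b : Matrix (Fin N) (Fin m) ℝ)
    (U V : Matrix (Fin N) (Fin n × Fin m) ℝ)
    (hU : U = Matrix.of fun i (p : Fin n × Fin m) => (chebMat P (p.1 : ℕ) * b) i p.2)
    (L : Matrix (Fin n × Fin m) (Fin n × Fin m) ℝ)
    (hQR : U = V * Lᵀ)
    (hV : Vᵀ * V = 1)
    (hLtri : ∀ k l : Fin n, (k : ℕ) < l → ∀ i j : Fin m, L (k, i) (l, j) = 0) :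
    ∀ k : Fin n, 1 ≤ (k : ℕ) → ∀ i j : Fin m, (Vᵀ * b) (k, i) j = 0 := by
  intro k hk i j
  let first : Fin n := ⟨0, k.pos⟩
  have hb : b = U.submatrix id fun j => (first, j) := by
    ext x j
    simp [hU, first, chebMat_zero]
  calc (Vᵀ * b) (k, i) j = (Vᵀ * U) (k, i) (first, j) := by rw [hb]; rfl
    _ = L (first, j) (k, i) := by rw [transpose_mul_eq_of_eq_mul_transpose hQR hV, transpose_apply]
    _ = 0 := hLtri first k hk j i

theorem stmt3 (N m n : ℕ) (hN : 0 < N) (hm : 0 < m) (hn : 0 < n)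
    (P : Matrix (Fin N) (Fin N) ℝ) (hP : P.IsSymm)
    (b : Matrix (Fin N) (Fin m) ℝ)
    (U V : Matrix (Fin N) (Fin n × Fin m) ℝ)
    (hU : U = Matrix.of fun i (p : Fin n × Fin m) => (chebMat P (p.1 : ℕ) * b) i p.2)
    (L : Matrix (Fin n × Fin m) (Fin n × Fin m) ℝ)
    (hQR : U = V * Lᵀ)
    (hV : Vᵀ * V = 1)
    (hLinv : IsUnit L)
    (hLtri : ∀ k l : Fin n, (k : ℕ) < l → ∀ i j : Fin m, L (k, i) (l, j) = 0) :
    ∀ k : Fin n, 1 ≤ (k : ℕ) → ∀ i j : Fin m, (Vᵀ * b) (k, i) j = 0 :=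
  stmt3_general N m n P b U V hU L hQR hV hLtri
end

section
/- Let P be a symmetric real N×N matrix and b a real N×m matrix. For all integers k, l ≥ 0, the inner products of the snapshots are expressed by the data via (T_k(P) b)ᵀ (T_l(P) b) = (1/2) · ( bᵀ T_{k+l}(P) b + bᵀ T_{|k−l|}(P) b ). -/
open Matrix Polynomial

theorem Matrix.IsSymm.aeval {n R : Type*} [Fintype n] [DecidableEq n] [CommSemiring R]
    {A : Matrix n n R} (hA : A.IsSymm) (p : R[X]) : (Polynomial.aeval A p).IsSymm := by
  induction p using Polynomial.induction_on' with
  | add p q hp hq => simpa only [map_add] using hp.add hq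
  | monomial k c => simpa only [aeval_monomial, ← Algebra.smul_def] using (hA.pow k).smul c

section chebMat

variable {I : Type*} [Fintype I] [DecidableEq I]

theorem Matrix.IsSymm.chebMat {P : Matrix I I ℝ} (hP : P.IsSymm) (k : ℤ) :
    (chebMat P k).IsSymm :=
  hP.aeval _

variable (P : Matrix I I ℝ)

theorem chebMat_abs (k : ℤ) : chebMat P |k| = chebMat P k := by
  rw [chebMat, chebMat, ← Int.natCast_natAbs, Chebyshev.T_natAbs]

theorem chebMat_mul_chebMat (k l : ℤ) :
    chebMat P k * chebMat P l = (1 / 2 : ℝ) • (chebMat P (k + l) + chebMat P (k - l)) := by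
  have h := congrArg (Polynomial.aeval P) (Chebyshev.T_mul_T ℝ k l)
  simp only [map_mul, map_add, map_ofNat] at h
  rw [chebMat, chebMat, chebMat, chebMat, ← h, Matrix.mul_assoc, two_mul, ← two_smul ℝ,
    smul_smul]
  norm_num

end chebMat

theorem stmt4 (N m : ℕ) (P : Matrix (Fin N) (Fin N) ℝ) (hP : P.IsSymm)
    (b : Matrix (Fin N) (Fin m) ℝ) (k l : ℕ) :
    (chebMat P k * b)ᵀ * (chebMat P l * b) =
      (1 / 2 : ℝ) • (bᵀ * chebMat P (k + l) * b + bᵀ * chebMat P |(k : ℤ) - l| * b) := by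
  calc (chebMat P k * b)ᵀ * (chebMat P l * b) = bᵀ * (chebMat P k * chebMat P l) * b := by
        rw [transpose_mul, (hP.chebMat k).eq, Matrix.mul_assoc, Matrix.mul_assoc, Matrix.mul_assoc]
    _ = _ := by
        rw [chebMat_mul_chebMat, chebMat_abs, Matrix.mul_smul, Matrix.smul_mul, Matrix.mul_add,
          Matrix.add_mul]
end
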